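/- For every sticky ruleset R, the ruleset rew(R) is sticky. -/

import Mathlib

set_option maxHeartbeats 1000000

noncomputable section

open Classical

/-! ### Basic syntax: predicates, atoms, rules, databases, instances -/

/-- An abstract atom: a predicate identifier together with a list of
argument identifiers (variables in rules/queries, constants in databases). -/
abbrev PAtom : Type := ℕ × List ℕ

/-- An existential rule `∀x∀y (α(x,y) → ∃z β(y,z))`, given by a body
(a finite conjunction/list of atoms over variables) and a single head atom.
Head variables not occurring in the body are (implicitly) existentially
quantified. -/
abbrev ERule : Type := List PAtom × PAtom

/-- A ruleset is a finite set (list) of existential rules. -/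
abbrev Ruleset : Type := List ERule

/-- A database is a finite set (list) of facts, i.e. atoms over constants. -/
abbrev Database : Type := List PAtom

/-- Terms: constants, (labelled) nulls, and functional (Skolem) terms. -/
inductive GTerm : Type where
  | const : ℕ → GTerm
  | null : ℕ → GTerm
  | func : ℕ → List GTerm → GTerm

instance : DecidableEq GTerm := Classical.decEq _

/-- A (ground) atom of an instance: a predicate with a list of terms. -/
structure GAtom : Type where
  pred : ℕ
  args : List GTerm

/-- An instance is a (possibly infinite) set of atoms (it is automatically
countable, as `GAtom` is a countable type). -/
abbrev Inst : Type := Set GAtom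

/-- Applying a variable assignment to an abstract atom. -/
def substAtom (h : ℕ → GTerm) (a : PAtom) : GAtom := ⟨a.1, a.2.map h⟩

/-- The list of all variable occurrences in the body of a rule. -/
def bodyVarList (ρ : ERule) : List ℕ := ρ.1.foldr (fun a r => a.2 ++ r) []

/-- The variables of the head of a rule. -/
def headVars (ρ : ERule) : List ℕ := ρ.2.2

/-- A join variable: a variable occurring more than once in the body. -/
def isJoinVar (ρ : ERule) (v : ℕ) : Prop := 1 < (bodyVarList ρ).count v

/-- The frontier of a rule: variables shared between body and head. -/
def frontierVars (ρ : ERule) : Set ℕ := {v | v ∈ bodyVarList ρ ∧ v ∈ headVars ρ}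

/-- Existential variables of a rule: head variables not occurring in the body. -/
def existVars (ρ : ERule) : Set ℕ := {v | v ∈ headVars ρ ∧ v ∉ bodyVarList ρ}

/-- Satisfaction of an existential rule by an instance: every homomorphic
match of the body extends to a match of the head. -/
def satRule (I : Inst) (ρ : ERule) : Prop :=
  ∀ h : ℕ → GTerm, (∀ a ∈ ρ.1, substAtom h a ∈ I) →
    ∃ g : ℕ → GTerm, (∀ v ∈ bodyVarList ρ, g v = h v) ∧ substAtom g ρ.2 ∈ I

/-- The instance corresponding to a database (constants interpreted as constants). -/
def dbInst (D : Database) : Inst := {α | ∃ a ∈ D, α = substAtom GTerm.const a}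

/-- `I` is a model of the database `D` and the ruleset `R`. -/
def isModelOf (I : Inst) (D : Database) (R : Ruleset) : Prop :=
  dbInst D ⊆ I ∧ ∀ ρ ∈ R, satRule I ρ

/-- The active domain of an instance. -/
def adom (I : Inst) : Set GTerm := {t | ∃ α ∈ I, t ∈ α.args}

/-! ### Paths and regular path queries -/

/-- A directed path from `s` to `t` in the instance `I` whose successive
binary-predicate edge labels spell the word `w`. -/
inductive IPath (I : Inst) : GTerm → List ℕ → GTerm → Prop where
  | nil (t : GTerm) : IPath I t [] t
  | cons {s t u : GTerm} {p : ℕ} {w : List ℕ} :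
      (⟨p, [s, t]⟩ : GAtom) ∈ I → IPath I t w u → IPath I s (p :: w) u

/-- Satisfaction of the Boolean path query `∃x,y. L(x,y)` (with `x ≠ y`,
`L` a word language over binary predicates) by an instance. -/
def satLang (I : Inst) (L : Set (List ℕ)) : Prop :=
  ∃ s t w, s ∈ adom I ∧ t ∈ adom I ∧ IPath I s w t ∧ w ∈ L

/-- Satisfaction of the Boolean RPQ `∃x,y. A(x,y)` given by a regular
expression `A` over binary predicates. -/
def satRPQ (I : Inst) (A : RegularExpression ℕ) : Prop := satLang I A.matches'

/-- Certain-answer entailment of a Boolean RPQ: every model of `D` and `R`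
satisfies the query. -/
def entailsRPQ (D : Database) (R : Ruleset) (A : RegularExpression ℕ) : Prop :=
  ∀ I : Inst, isModelOf I D R → satRPQ I A

/-! ### The Skolem chase (with Skolem symbols determined by the isomorphism
type of the instantiated rule head) -/

/-- The result of applying a trigger `(ρ, h)`: the instantiated head atom,
where each existential variable is replaced by a Skolem term whose function
symbol encodes the isomorphism type of the instantiated head query, applied
to the (distinct) frontier terms. -/
def skolemAtom (ρ : ERule) (h : ℕ → GTerm) : GAtom :=
  let bv := bodyVarList ρ
  let hargs : List (GTerm ⊕ ℕ) :=
    ρ.2.2.map (fun v => if v ∈ bv then Sum.inl (h v) else Sum.inr v)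
  let fts : List GTerm := (hargs.filterMap Sum.getLeft?).dedup
  let evs : List ℕ := (hargs.filterMap Sum.getRight?).dedup
  let pat : ℕ × List (ℕ ⊕ ℕ) :=
    (ρ.2.1, hargs.map (fun x =>
      match x with
      | Sum.inl t => Sum.inl (fts.findIdx (fun u => decide (u = t)))
      | Sum.inr v => Sum.inr (evs.findIdx (fun u => decide (u = v)))))
  ⟨ρ.2.1, ρ.2.2.map (fun v =>
    if v ∈ bv then h v
    else GTerm.func (Encodable.encode (pat, evs.findIdx (fun u => decide (u = v)))) fts)⟩

/-- One (parallel) chase step: apply all triggers of `R` in `I`. -/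
def chaseStep (R : Set ERule) (I : Inst) : Inst :=
  I ∪ {α | ∃ ρ ∈ R, ∃ h : ℕ → GTerm, (∀ a ∈ ρ.1, substAtom h a ∈ I) ∧ α = skolemAtom ρ h}

/-- The finite stages of the Skolem chase. -/
def chaseStage (R : Set ERule) (I : Inst) : ℕ → Inst
  | 0 => I
  | n + 1 => chaseStep R (chaseStage R I n)

/-- The Skolem chase of an instance `I` with a (possibly infinite) set of rules `R`. -/
def chase (I : Inst) (R : Set ERule) : Inst := ⋃ n, chaseStage R I n

/-- The set of rules of a (finite, syntactic) ruleset. -/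
def rsSet (R : Ruleset) : Set ERule := {ρ | ρ ∈ R}

/-! ### Conjunctive queries, UCQs and finite unification sets -/

/-- Satisfaction of a CQ (list of atoms; `free` lists its free variables,
all other variables are existential) under the answer tuple `a`. -/
def satCQ (I : Inst) (atoms : List PAtom) (free : List ℕ) (a : List GTerm) : Prop :=
  ∃ h : ℕ → GTerm, List.Forall₂ (fun v t => h v = t) free a ∧ ∀ β ∈ atoms, substAtom h β ∈ I

/-- A UCQ: a disjunction (list) of CQs sharing a tuple of free variables. -/
abbrev UCQ : Type := List (List PAtom) × List ℕ

/-- Satisfaction of a UCQ under the answer tuple `a`. -/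
def satUCQ (I : Inst) (Q : UCQ) (a : List GTerm) : Prop := ∃ d ∈ Q.1, satCQ I d Q.2 a

/-- `R` is a finite unification set (fus): every UCQ has a UCQ rewriting. -/
def isFUS (R : Ruleset) : Prop :=
  ∀ Q : UCQ, ∃ Q' : UCQ, Q'.2 = Q.2 ∧
    ∀ (D : Database) (a : List ℕ),
      (satUCQ (chase (dbInst D) (rsSet R)) Q (a.map GTerm.const) ↔
        satUCQ (dbInst D) Q' (a.map GTerm.const))

/-! ### Sticky and stellar rulesets -/

/-- Variable `v` appears at a position of the head of `ρ` marked by `m`. -/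
def markedInHead (m : ℕ → Set ℕ) (ρ : ERule) (v : ℕ) : Prop :=
  ∃ i ∈ m ρ.2.1, ρ.2.2[i]? = some v

/-- `m` is a sticky marking for the set of rules `R`: every join variable of a
rule appears at a marked position of its head atom, and every body variable at
a marked position appears at a marked position of the head atom. -/
def stickyMarking (m : ℕ → Set ℕ) (R : Set ERule) : Prop :=
  ∀ ρ ∈ R,
    (∀ v, isJoinVar ρ v → markedInHead m ρ v) ∧
    (∀ v, ∀ a ∈ ρ.1, (∃ i ∈ m a.1, a.2[i]? = some v) → markedInHead m ρ v)

/-- A (possibly infinite) set of rules is sticky iff it admits a sticky marking. -/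
def isStickySet (R : Set ERule) : Prop := ∃ m, stickyMarking m R

/-- A ruleset is sticky iff it admits a sticky marking. -/
def isSticky (R : Ruleset) : Prop := isStickySet (rsSet R)

/-- A stellar rule: at most one join variable, which must be a frontier
(head) variable. -/
def isStellarRule (ρ : ERule) : Prop :=
  (∀ v w, isJoinVar ρ v → isJoinVar ρ w → v = w) ∧
  ∀ v, isJoinVar ρ v → v ∈ headVars ρ

/-! ### Merging two terms of an instance -/

/-- The map replacing the terms `s` and `t` by `u`. -/
def mergeMap (s t u : GTerm) : GTerm → GTerm := fun v => if v = s ∨ v = t then u else v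

/-- `I[s,t ↦ u]`: the instance obtained from `I` by replacing every
occurrence of `s` or `t` by `u`. -/
def mergeInst (I : Inst) (s t u : GTerm) : Inst :=
  (fun α => GAtom.mk α.pred (α.args.map (mergeMap s t u))) '' I

/-! ### Stellar queries and stellar types -/

/-- A stellar query with free variable `y`: `y` is the only join variable and
each atom contains at most one occurrence of `y`. -/
def isSQ (atoms : List PAtom) (y : ℕ) : Prop :=
  (∀ v, v ≠ y → (atoms.foldr (fun a r => a.2 ++ r) []).count v ≤ 1) ∧
  ∀ a ∈ atoms, a.2.count y ≤ 1

/-- Satisfaction of a stellar query at the term `s`. -/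
def satSQ (I : Inst) (atoms : List PAtom) (y : ℕ) (s : GTerm) : Prop :=
  ∃ h : ℕ → GTerm, h y = s ∧ ∀ a ∈ atoms, substAtom h a ∈ I

/-- Two terms have the same stellar type `★(s) = ★(t)` iff they satisfy
exactly the same stellar queries (equivalently, their most specific stellar
queries are equivalent). -/
def sameStellarType (I : Inst) (s t : GTerm) : Prop :=
  ∀ (atoms : List PAtom) (y : ℕ), isSQ atoms y → (satSQ I atoms y s ↔ satSQ I atoms y t)

/-! ### Regular types -/

/-- The regular type `↑_A(t)` of a term w.r.t. a DFA: all pairs `(q, q')` such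
that `t` has an outgoing path labelled by some word `w` with `δ*(q, w) = q'`. -/
def regType {σ : Type} (I : Inst) (dfa : DFA ℕ σ) (t : GTerm) : Set (σ × σ) :=
  {p | ∃ w u, IPath I t w u ∧ dfa.evalFrom p.1 w = p.2}

/-! ### Homomorphisms between instances -/

/-- A homomorphism from `I` to `J`: a constant-preserving map on terms
sending every atom of `I` to an atom of `J`. -/
def isHom (h : GTerm → GTerm) (I J : Inst) : Prop :=
  (∀ c, h (GTerm.const c) = GTerm.const c) ∧
  ∀ α ∈ I, (⟨α.pred, α.args.map h⟩ : GAtom) ∈ J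

/-! ### Backward rewriting (à la König et al.) -/

/-- Applying a variable renaming to an abstract atom. -/
def substP (σ : ℕ → ℕ) (a : PAtom) : PAtom := (a.1, a.2.map σ)

/-- The variables of a CQ. -/
def cqVars (Q : List PAtom) : Set ℕ := {v | ∃ a ∈ Q, v ∈ a.2}

/-- The rule `ρ` is backward applicable to the CQ `Q` (with free variables
`Y`) with respect to the variable identification `σ` and the isomorphism `f`
from the head of `ρ` to an atom of `Q|σ`. -/
def backApp (ρ : ERule) (Y : Set ℕ) (Q : List PAtom) (σ f : ℕ → ℕ) : Prop :=
  (∀ y ∈ Y, σ y = y) ∧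
  (∀ v, ∀ y ∈ Y, σ v = y → v = y) ∧
  substP f ρ.2 ∈ Q.map (substP σ) ∧
  (∀ v w, v ∈ headVars ρ → w ∈ headVars ρ → f v = f w → v = w) ∧
  (∀ z ∈ existVars ρ, f z ∉ Y) ∧
  (∀ a ∈ Q.map (substP σ), (∃ z ∈ existVars ρ, f z ∈ a.2) → a = substP f ρ.2)

/-- One backward rewriting step on CQs with free variables `Y`, using a rule
of `R` with a minimal variable identification: the matched atom is replaced
by the rule body (with fresh non-frontier variables). -/
def backStep (R : Set ERule) (Y : Set ℕ) (Q Q' : List PAtom) : Prop :=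
  ∃ ρ ∈ R, ∃ σ f g : ℕ → ℕ,
    backApp ρ Y Q σ f ∧
    (∀ σ' : ℕ → ℕ, (∀ v w, σ' v = σ' w → σ v = σ w) →
      (∃ v w, v ∈ cqVars Q ∧ w ∈ cqVars Q ∧ σ v = σ w ∧ σ' v ≠ σ' w) →
      ¬ backApp ρ Y Q σ' f) ∧
    (∀ v ∈ frontierVars ρ, g v = f v) ∧
    (∀ v w, v ∈ bodyVarList ρ → v ∉ headVars ρ → w ∈ bodyVarList ρ → w ∉ headVars ρ →
      g v = g w → v = w) ∧
    (∀ v, v ∈ bodyVarList ρ → v ∉ headVars ρ →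
      g v ∉ cqVars (Q.map (substP σ)) ∧ g v ∉ Y) ∧
    Q' = (Q.map (substP σ)).filter (fun a => decide (a ≠ substP f ρ.2)) ++ ρ.1.map (substP g)

/-- `rew(R)`: `R` together with all rules obtained from rules of `R` by
rewriting their bodies (with the frontier treated as free variables). -/
def rewSet (R : Set ERule) : Set ERule :=
  R ∪ {ρ' | ∃ ρ ∈ R, ∃ q, Relation.ReflTransGen (backStep R (frontierVars ρ)) ρ.1 q ∧ ρ' = (q, ρ.2)}

/-! ### Frontier terms of chase atoms and quick rulesets -/

/-- `t` is a frontier term of the chase atom `β`: a term of `β` introduced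
during the chase strictly earlier than `β`. -/
def isFrontierTermOf (I : Inst) (R : Set ERule) (β : GAtom) (t : GTerm) : Prop :=
  t ∈ β.args ∧ ∃ i, t ∈ adom (chaseStage R I i) ∧ β ∉ chaseStage R I i

/-- A set of rules is quick: every chase atom whose frontier terms all occur
in the initial instance is already produced by the first chase step. -/
def isQuick (R : Set ERule) : Prop :=
  ∀ (I : Inst) (β : GAtom), β ∈ chase I R →
    (∀ t, isFrontierTermOf I R β t → t ∈ adom I) → β ∈ chaseStage R I 1

/-! ### Cores of rule bodies and the rulesets cr⁺(R), R⁺ -/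

/-- A homomorphism between CQs fixing the variables in `Y` pointwise. -/
def cqHomTo (Y : Set ℕ) (q q' : List PAtom) : Prop :=
  ∃ h : ℕ → ℕ, (∀ y ∈ Y, h y = y) ∧ ∀ a ∈ q, substP h a ∈ q'

/-- `q'` is a core of `q` with the variables of `Y` treated as constants:
a minimal sub-conjunction of `q` into which `q` homomorphically maps. -/
def isCoreOf (Y : Set ℕ) (q' q : List PAtom) : Prop :=
  (∀ a ∈ q', a ∈ q) ∧ cqHomTo Y q q' ∧
  ∀ q'' : List PAtom, (∀ a ∈ q'', a ∈ q') → cqHomTo Y q q'' → ∀ a ∈ q', a ∈ q''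

/-- `ρ'` is (a) `core(ρ)`: same head, body a core of the body of `ρ` with the
frontier variables treated as constants. -/
def isCoreRuleOf (ρ' ρ : ERule) : Prop := ρ'.2 = ρ.2 ∧ isCoreOf (frontierVars ρ) ρ'.1 ρ.1

/-- The rule obtained by substituting all join variables of `ρ` by one and
the same fresh variable. -/
def collapseJoins (ρ : ERule) : ERule :=
  let fv := ((bodyVarList ρ ++ headVars ρ).foldr max 0) + 1
  let c : ℕ → ℕ := fun v => if 1 < (bodyVarList ρ).count v then fv else v
  (ρ.1.map (substP c), substP c ρ.2)

/-- `cr⁺(R)`: the cores of the rules of `rew(R)` (via the core-choosing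
function `C`), augmented, for every non-stellar such rule, with its variant
where all join variables are identified with a single fresh variable. -/
def crPlus (C : ERule → ERule) (R : Set ERule) : Set ERule :=
  (C '' rewSet R) ∪
  {ρ' | ∃ ρ ∈ rewSet R, ¬ isStellarRule (C ρ) ∧ ρ' = collapseJoins (C ρ)}

/-- `R⁺`: `cr⁺(R)` with all rules having two or more join variables removed. -/
def rPlusOf (C : ERule → ERule) (R : Set ERule) : Set ERule :=
  {ρ ∈ crPlus C R | ¬ ∃ v w, isJoinVar ρ v ∧ isJoinVar ρ w ∧ v ≠ w}

/-! ### Two-counter automata, the grid database/ruleset, and the query DFA -/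

/-- A (deterministic, Minsky-style) two-counter automaton. Each state `q`
carries the instruction
`if C == 0 then C += 1; goto qt q else C += d; goto qf q`,
where `C` is counter `x` if `cX q` and counter `y` otherwise, and `d = +1`
if `dPlus q` and `d = -1` otherwise. -/
structure TCA where
  numStates : ℕ
  cX : Fin (numStates + 1) → Bool
  dPlus : Fin (numStates + 1) → Bool
  qt : Fin (numStates + 1) → Fin (numStates + 1)
  qf : Fin (numStates + 1) → Fin (numStates + 1)
  q0 : Fin (numStates + 1)
  qhalt : Fin (numStates + 1)

abbrev TCA.State (M : TCA) : Type := Fin (M.numStates + 1)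

/-- One step of a two-counter automaton on a configuration `(q, x, y)`. -/
def TCA.step (M : TCA) : M.State × ℕ × ℕ → M.State × ℕ × ℕ := fun c =>
  let q := c.1
  let x := c.2.1
  let y := c.2.2
  if M.cX q then
    if x = 0 then (M.qt q, 1, y)
    else (M.qf q, (if M.dPlus q then x + 1 else x - 1), y)
  else
    if y = 0 then (M.qt q, x, 1)
    else (M.qf q, x, (if M.dPlus q then y + 1 else y - 1))

/-- `M` halts when started in state `q0` with both counters zero. -/
def TCA.Halts (M : TCA) : Prop := ∃ k, ((M.step)^[k] (M.q0, 0, 0)).1 = M.qhalt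

/-- The fixed predicate identifiers. -/
def pIncX : ℕ := 0
def pIncY : ℕ := 1
def pDecX : ℕ := 2
def pDecY : ℕ := 3
def pXZero : ℕ := 4
def pYZero : ℕ := 5
def pSucc : ℕ := 6
def pZero : ℕ := 7
def pGridPoint : ℕ := 8
def pXCoord : ℕ := 9
def pYCoord : ℕ := 10

/-- `Σ(C += 1)` for the counter selected by `b` (`true` = counter x). -/
def sIncr (b : Bool) : ℕ := if b then pIncX else pIncY
/-- `Σ(C -= 1)`. -/
def sDecr (b : Bool) : ℕ := if b then pDecX else pDecY
/-- `Σ(C == 0)`. -/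
def sZero (b : Bool) : ℕ := if b then pXZero else pYZero

/-- The states of the DFA `A_M`: the states of `M` plus four auxiliary states
(then₁, then₂, else₁, else₂) per state of `M`, plus a sink (`none`). -/
abbrev AState (M : TCA) : Type := Option (M.State ⊕ M.State × Fin 4)

/-- The transition function of the DFA `A_M`: the instruction of each state
`q` of `M` is compiled into the 'then' branch reading
`Σ(C==0), Σ(C==0), Σ(C+=1)` (ending in `qt q`) and the 'else' branch reading
`Σ(C-=1), Σ(C+=1), Σ(C+=d)` (ending in `qf q`). -/
def TCA.delta (M : TCA) : AState M → ℕ → AState M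
  | none, _ => none
  | some (Sum.inl q), a =>
    if a = sZero (M.cX q) then some (Sum.inr (q, (0 : Fin 4)))
    else if a = sDecr (M.cX q) then some (Sum.inr (q, (2 : Fin 4)))
    else none
  | some (Sum.inr (q, i)), a =>
    if i = (0 : Fin 4) then
      (if a = sZero (M.cX q) then some (Sum.inr (q, (1 : Fin 4))) else none)
    else if i = (1 : Fin 4) then
      (if a = sIncr (M.cX q) then some (Sum.inl (M.qt q)) else none)
    else if i = (2 : Fin 4) then
      (if a = sIncr (M.cX q) then some (Sum.inr (q, (3 : Fin 4))) else none)
    else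
      (if a = (if M.dPlus q then sIncr (M.cX q) else sDecr (M.cX q))
        then some (Sum.inl (M.qf q)) else none)

/-- The DFA `A_M` simulating the TCA `M`; its starting (accepting) state is
the starting (halting) state of `M`. -/
def tcaDFA (M : TCA) : DFA ℕ (AState M) :=
  ⟨M.delta, some (Sum.inl M.q0), {some (Sum.inl M.qhalt)}⟩

/-- The fixed database `D_grid = {Succ(a,b), Zero(a)}` (constants `a = 0`, `b = 1`). -/
def Dgrid : Database := [(pSucc, [0, 1]), (pZero, [0])]

/-- The fixed grid-building ruleset `R_grid`. -/
def Rgrid : Ruleset :=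
  [ ([(pSucc, [0, 1])], (pSucc, [1, 2])),
    ([(pSucc, [0, 1]), (pSucc, [2, 3])], (pGridPoint, [0, 2, 4])),
    ([(pGridPoint, [0, 1, 2])], (pXCoord, [2, 0])),
    ([(pGridPoint, [0, 1, 2])], (pYCoord, [2, 1])),
    ([(pXCoord, [3, 0]), (pYCoord, [3, 2]), (pXCoord, [4, 1]), (pYCoord, [4, 2]),
       (pSucc, [0, 1])], (pIncX, [3, 4])),
    ([(pXCoord, [3, 0]), (pYCoord, [3, 2]), (pXCoord, [4, 0]), (pYCoord, [4, 5]),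
       (pSucc, [2, 5])], (pIncY, [3, 4])),
    ([(pIncX, [0, 1])], (pDecX, [1, 0])),
    ([(pIncY, [0, 1])], (pDecY, [1, 0])),
    ([(pXCoord, [0, 1]), (pZero, [1])], (pXZero, [0, 0])),
    ([(pYCoord, [0, 1]), (pZero, [1])], (pYZero, [0, 0])) ]

/-- The grid point with coordinates `(x, y)`. -/
def gpt (x y : ℕ) : GTerm := GTerm.func 0 [GTerm.const x, GTerm.const y]

/-- The infinite grid instance `G`: terms are coordinate pairs, with
`IncX`/`IncY`/`DecX`/`DecY` edges and `XZero`/`YZero` self-loops. -/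
def GridInst : Inst :=
  {α | (∃ x y, α = ⟨pIncX, [gpt x y, gpt (x + 1) y]⟩) ∨
       (∃ x y, α = ⟨pIncY, [gpt x y, gpt x (y + 1)]⟩) ∨
       (∃ x y, α = ⟨pDecX, [gpt (x + 1) y, gpt x y]⟩) ∨
       (∃ x y, α = ⟨pDecY, [gpt x (y + 1), gpt x y]⟩) ∨
       (∃ y, α = ⟨pXZero, [gpt 0 y, gpt 0 y]⟩) ∨
       (∃ x, α = ⟨pYZero, [gpt x 0, gpt x 0]⟩)}

/-- One step of the DFA `A_M` walking over the instance `I`: move along an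
edge of `I` whose label matches a transition from the current state. -/
def walkStep (M : TCA) (I : Inst) (c c' : AState M × GTerm) : Prop :=
  ∃ p, (⟨p, [c.2, c'.2]⟩ : GAtom) ∈ I ∧ M.delta c.1 p = c'.1

/-! ### Encoding regular expressions (for computability statements) -/

/-- A concrete injective serialization of regular expressions (over an
encodable alphabet) as lists of naturals. -/
def encodeREg {α : Type} [Encodable α] : RegularExpression α → List ℕ
  | RegularExpression.zero => [0]
  | RegularExpression.epsilon => [1]
  | RegularExpression.char a => [2, Encodable.encode a]
  | RegularExpression.plus a b => 3 :: (encodeREg a ++ encodeREg b)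
  | RegularExpression.comp a b => 4 :: (encodeREg a ++ encodeREg b)
  | RegularExpression.star a => 5 :: encodeREg a

/-! ### Datalog rules, two-way and higher-arity path queries -/

/-- A Datalog rule: no existential variables in the head. -/
def isDatalogRule (ρ : ERule) : Prop := ∀ v ∈ ρ.2.2, v ∈ bodyVarList ρ

/-- The predicates occurring in a database. -/
def dbPreds (D : Database) : Set ℕ := {p | ∃ a ∈ D, a.1 = p}

/-- The predicates occurring in a ruleset. -/
def rsPreds (R : Ruleset) : Set ℕ := {p | ∃ ρ ∈ R, (∃ a ∈ ρ.1, a.1 = p) ∨ ρ.2.1 = p}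

/-- The predicates occurring in rule heads of a ruleset. -/
def headPreds (R : Ruleset) : Set ℕ := {p | ∃ ρ ∈ R, ρ.2.1 = p}

/-- A two-way path: `inl p` traverses a `p`-edge forwards, `inr p` (i.e. `p⁻`)
traverses a `p`-edge backwards. -/
inductive IPath2 (I : Inst) : GTerm → List (ℕ ⊕ ℕ) → GTerm → Prop where
  | nil (t : GTerm) : IPath2 I t [] t
  | fwd {s t u : GTerm} {p : ℕ} {w : List (ℕ ⊕ ℕ)} :
      (⟨p, [s, t]⟩ : GAtom) ∈ I → IPath2 I t w u → IPath2 I s (Sum.inl p :: w) u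
  | bwd {s t u : GTerm} {p : ℕ} {w : List (ℕ ⊕ ℕ)} :
      (⟨p, [t, s]⟩ : GAtom) ∈ I → IPath2 I t w u → IPath2 I s (Sum.inr p :: w) u

/-- Satisfaction of a Boolean 2RPQ given by a regular expression over
`Σ ∪ Σ⁻`. -/
def sat2RPQ (I : Inst) (A : RegularExpression (ℕ ⊕ ℕ)) : Prop :=
  ∃ s t w, s ∈ adom I ∧ t ∈ adom I ∧ IPath2 I s w t ∧ w ∈ A.matches'

/-- Entailment of a Boolean 2RPQ. -/
def entails2RPQ (D : Database) (R : Ruleset) (A : RegularExpression (ℕ ⊕ ℕ)) : Prop :=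
  ∀ I : Inst, isModelOf I D R → sat2RPQ I A

/-- A higher-arity path: an atom `P(t₁, t₂, …, tₙ)` (arity ≥ 2) contributes a
`P`-labelled edge from `t₁` to `t₂`. -/
inductive HPath (I : Inst) : GTerm → List ℕ → GTerm → Prop where
  | nil (t : GTerm) : HPath I t [] t
  | cons {s t u : GTerm} {p : ℕ} {w : List ℕ} (rest : List GTerm) :
      (⟨p, s :: t :: rest⟩ : GAtom) ∈ I → HPath I t w u → HPath I s (p :: w) u

/-- Satisfaction of a Boolean higher-arity RPQ (HRPQ). -/
def satHRPQ (I : Inst) (A : RegularExpression ℕ) : Prop :=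
  ∃ s t w, s ∈ adom I ∧ t ∈ adom I ∧ HPath I s w t ∧ w ∈ A.matches'

/-- Entailment of a Boolean HRPQ. -/
def entailsHRPQ (D : Database) (R : Ruleset) (A : RegularExpression ℕ) : Prop :=
  ∀ I : Inst, isModelOf I D R → satHRPQ I A

/-- A ruleset is finitely RPQ-controllable: every non-entailed Boolean RPQ
has a finite countermodel. -/
def finitelyRPQControllable (R : Ruleset) : Prop :=
  ∀ (A : RegularExpression ℕ) (D : Database),
    ¬ entailsRPQ D R A → ∃ I : Inst, I.Finite ∧ isModelOf I D R ∧ ¬ satRPQ I A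

/-! The sticky marking of `R` is also a sticky marking of `rew(R)`. Call a variable of a CQ
constrained if it is a join variable or occurs at a marked position. For `ρ ∈ R` the constrained
variables of its body are frontier variables marked in the head of `ρ`, and this invariant
survives every backward rewriting step with a rule `τ ∈ R`. Constrained variables of the body of
`τ` are marked in the head of `τ`, so their images sit at marked positions of the unified atom and
are covered by the invariant. A new join can only arise where the unifier `σ` identified a
variable `u` with another one; if `u` occurred just once, outside the unified atoms, renaming it
apart would give a strictly finer unifier, so minimality of `σ` makes `u` a join variable
already. -/

section Occurrences

def occCount (Q : List PAtom) (v : ℕ) : ℕ := (Q.flatMap Prod.snd).count v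

def markedIn (m : ℕ → Set ℕ) (Q : List PAtom) (v : ℕ) : Prop :=
  ∃ a ∈ Q, ∃ i ∈ m a.1, a.2[i]? = some v

def joinOrMarkedVars (m : ℕ → Set ℕ) (Q : List PAtom) : Set ℕ :=
  {v | 1 < occCount Q v ∨ markedIn m Q v}

variable {m : ℕ → Set ℕ} {Q : List PAtom} {v : ℕ}

lemma bodyVarList_eq_flatMap (ρ : ERule) : bodyVarList ρ = ρ.1.flatMap Prod.snd := by
  rw [bodyVarList]
  induction ρ.1 with
  | nil => rfl
  | cons a Q ih => simp [ih]

lemma isJoinVar_iff {ρ : ERule} : isJoinVar ρ v ↔ 1 < occCount ρ.1 v := by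
  rw [isJoinVar, bodyVarList_eq_flatMap, occCount]

lemma mem_cqVars_iff : v ∈ cqVars Q ↔ v ∈ Q.flatMap Prod.snd := by
  simp [cqVars, List.mem_flatMap]

lemma cqVars_finite (Q : List PAtom) : (cqVars Q).Finite :=
  (Q.flatMap Prod.snd).finite_toSet.subset fun _ => mem_cqVars_iff.1

lemma occCount_append (Q₁ Q₂ : List PAtom) (v : ℕ) :
    occCount (Q₁ ++ Q₂) v = occCount Q₁ v + occCount Q₂ v := by
  simp [occCount, List.flatMap_append, List.count_append]

lemma occCount_map_substP (σ : ℕ → ℕ) (Q : List PAtom) (v : ℕ) :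
    occCount (Q.map (substP σ)) v = ((Q.flatMap Prod.snd).map σ).count v := by
  simp [occCount, List.flatMap_map, List.map_flatMap, substP]

lemma one_lt_occCount_of_mem_of_mem {a b : PAtom} (ha : a ∈ Q) (hb : b ∈ Q) (hab : a ≠ b)
    (hva : v ∈ a.2) (hvb : v ∈ b.2) : 1 < occCount Q v := by
  have hperm : Q.Perm (a :: b :: (Q.erase a).erase b) :=
    (List.perm_cons_erase ha).trans
      (.cons a (List.perm_cons_erase ((List.mem_erase_of_ne hab.symm).2 hb)))
  rw [occCount, ((hperm.flatMap_right _).count_eq v)]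
  have := List.count_pos_iff.2 hva
  have := List.count_pos_iff.2 hvb
  simp only [List.flatMap_cons, List.count_append]
  omega

lemma joinOrMarkedVars_subset_cqVars : joinOrMarkedVars m Q ⊆ cqVars Q := by
  rintro v (hv | ⟨a, ha, i, -, hi⟩)
  · exact mem_cqVars_iff.2 (List.count_pos_iff.1 (by unfold occCount at hv; omega))
  · exact ⟨a, ha, List.mem_of_getElem? hi⟩

lemma frontierVars_finite (ρ : ERule) : (frontierVars ρ).Finite :=
  (bodyVarList ρ).finite_toSet.subset fun _ hv => hv.1

lemma markedInHead.mem_headVars {ρ : ERule} (h : markedInHead m ρ v) : v ∈ headVars ρ :=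
  let ⟨_, _, hi⟩ := h; List.mem_of_getElem? hi

lemma stickyMarking_iff {R : Set ERule} :
    stickyMarking m R ↔ ∀ ρ ∈ R, joinOrMarkedVars m ρ.1 ⊆ {v | markedInHead m ρ v} := by
  refine forall₂_congr fun ρ _ => ⟨?_, fun h => ⟨?_, ?_⟩⟩
  · rintro ⟨hjoin, hmarked⟩ v (hv | ⟨a, ha, hi⟩)
    exacts [hjoin v (isJoinVar_iff.2 hv), hmarked v a ha hi]
  · exact fun v hv => h (Or.inl (isJoinVar_iff.1 hv))
  · exact fun v a ha hi => h (Or.inr ⟨a, ha, hi⟩)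

lemma mem_frontierVars_of_mem_joinOrMarkedVars {R : Set ERule} (hm : stickyMarking m R)
    {ρ : ERule} (hρ : ρ ∈ R) (hv : v ∈ joinOrMarkedVars m ρ.1) :
    v ∈ frontierVars ρ ∧ markedInHead m ρ v := by
  have hvH := stickyMarking_iff.1 hm ρ hρ hv
  refine ⟨⟨?_, hvH.mem_headVars⟩, hvH⟩
  rw [bodyVarList_eq_flatMap]
  exact mem_cqVars_iff.1 (joinOrMarkedVars_subset_cqVars hv)

end Occurrences

section Counting

variable {α β : Type*} [DecidableEq α] [DecidableEq β]

lemma List.count_map_eq_count {g : α → β} {l : List α} {x : α}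
    (h : ∀ u ∈ l, g u = g x → u = x) : (l.map g).count (g x) = l.count x := by
  rw [List.count_eq_countP, List.count_eq_countP, List.countP_map]
  exact List.countP_congr fun u hu => by
    simpa using ⟨h u hu, fun e : u = x => e ▸ rfl⟩

lemma List.exists_of_two_le_count_map {g : α → β} {l : List α} {y : β}
    (h : 2 ≤ (l.map g).count y) :
    (∃ u ∈ l, g u = y ∧ 2 ≤ l.count u) ∨
      ∃ u₁ ∈ l, ∃ u₂ ∈ l, u₁ ≠ u₂ ∧ g u₁ = y ∧ g u₂ = y := by
  by_contra! hcon
  obtain ⟨u, hu, rfl⟩ :=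
    List.mem_map.1 (List.count_pos_iff.1 (by omega : 0 < (l.map g).count y))
  have hcount := List.count_map_eq_count fun w hw hwu =>
    by_contra fun hne => hcon.2 w hw u hu hne hwu rfl
  have := hcon.1 u hu rfl
  omega

end Counting

section MinimalUnifier

def skipAt (N x : ℕ) : ℕ := if x < N then x else x + 1

lemma skipAt_of_lt {N x : ℕ} (h : x < N) : skipAt N x = x := if_pos h

lemma skipAt_lt_iff {N x : ℕ} : skipAt N x < N ↔ x < N := by
  unfold skipAt; split_ifs <;> omega

lemma skipAt_ne (N x : ℕ) : skipAt N x ≠ N := by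
  unfold skipAt; split_ifs <;> omega

lemma skipAt_injective (N : ℕ) : (skipAt N).Injective := fun x y => by
  unfold skipAt; split_ifs <;> omega

variable {τ : ERule} {Y : Set ℕ} {Q : List PAtom} {σ f : ℕ → ℕ}

lemma exists_finer_backApp (hApp : backApp τ Y Q σ f) (hY : Y.Finite) {u : ℕ} (huY : u ∉ Y)
    (hu : ∀ a ∈ Q, u ∈ a.2 → substP σ a ≠ substP f τ.2) :
    ∃ σ' : ℕ → ℕ, (∀ v w, σ' v = σ' w → σ v = σ w) ∧
      (∀ w, w ≠ u → σ' w ≠ σ' u) ∧ backApp τ Y Q σ' f := by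
  obtain ⟨hfix, hYinj, hhead, hfinj, hex, hexist⟩ := hApp
  obtain ⟨M, hM⟩ := (hY.union ((cqVars_finite Q).image σ)).bddAbove
  set N := M + 1
  have hN : ∀ n ∈ Y ∪ σ '' cqVars Q, n < N := fun n hn => Nat.lt_succ_of_le (hM hn)
  -- `σ'` sends `u` to the fresh value `N` and shifts the values `≥ N` of `σ`, so it stays finer
  set σ' := Function.update (skipAt N ∘ σ) u N
  have hσ'u : σ' u = N := Function.update_self ..
  have hσ' : ∀ w, w ≠ u → σ' w = skipAt N (σ w) := fun _ hw => Function.update_of_ne hw ..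
  have hσQ : ∀ a ∈ Q, ∀ w ∈ a.2, σ w < N := fun a ha w hw => hN _ (.inr ⟨w, ⟨a, ha, hw⟩, rfl⟩)
  have hagree : ∀ a ∈ Q, u ∉ a.2 → substP σ' a = substP σ a := fun a ha hua => by
    refine Prod.ext rfl (List.map_congr_left fun w hw => ?_)
    rw [hσ' w (ne_of_mem_of_not_mem hw hua), skipAt_of_lt (hσQ a ha w hw)]
  refine ⟨σ', fun v w hvw => ?_, fun w hw => hσ'u ▸ hσ' w hw ▸ skipAt_ne _ _, fun y hy => ?_,
    fun v y hy hvy => ?_, ?_, hfinj, hex, ?_⟩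
  · by_cases hv : v = u <;> by_cases hw : w = u
    · rw [hv, hw]
    · rw [hv, hσ'u, hσ' w hw] at hvw; exact absurd hvw.symm (skipAt_ne _ _)
    · rw [hw, hσ'u, hσ' v hv] at hvw; exact absurd hvw (skipAt_ne _ _)
    · rw [hσ' v hv, hσ' w hw] at hvw; exact skipAt_injective N hvw
  · have hyN : y < N := hN y (.inl hy)
    rw [hσ' y (ne_of_mem_of_not_mem hy huY), hfix y hy, skipAt_of_lt hyN]
  · have hyN : y < N := hN y (.inl hy)
    have hv : v ≠ u := by rintro rfl; omega
    rw [hσ' v hv] at hvy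
    exact hYinj v y hy ((skipAt_of_lt (skipAt_lt_iff.1 (hvy ▸ hyN))).symm.trans hvy)
  · obtain ⟨a₁, ha₁, h⟩ := List.mem_map.1 hhead
    exact List.mem_map.2 ⟨a₁, ha₁, (hagree a₁ ha₁ fun h' => hu a₁ ha₁ h' h).trans h⟩
  · rintro _ ha' ⟨z, hz, hfz⟩
    obtain ⟨a, ha, rfl⟩ := List.mem_map.1 ha'
    obtain ⟨w, hw, hwz⟩ := List.mem_map.1 hfz
    obtain ⟨a₁, ha₁, h⟩ := List.mem_map.1 hhead
    have hfzN : f z < N := by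
      have : f z ∈ (substP σ a₁).2 := h ▸ List.mem_map_of_mem hz.1
      obtain ⟨w₁, hw₁, hw₁z⟩ := List.mem_map.1 this
      exact hw₁z ▸ hσQ a₁ ha₁ w₁ hw₁
    have hwu : w ≠ u := by rintro rfl; omega
    rw [hσ' w hwu] at hwz
    rw [skipAt_of_lt (skipAt_lt_iff.1 (hwz ▸ hfzN))] at hwz
    have haH : substP σ a = substP f τ.2 :=
      hexist _ (List.mem_map_of_mem ha) ⟨z, hz, List.mem_map.2 ⟨w, hw, hwz⟩⟩
    rw [hagree a ha fun h => hu a ha h haH, haH]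

lemma one_lt_occCount_of_minimal (hApp : backApp τ Y Q σ f) (hY : Y.Finite)
    (hmin : ∀ σ' : ℕ → ℕ, (∀ v w, σ' v = σ' w → σ v = σ w) →
      (∃ v w, v ∈ cqVars Q ∧ w ∈ cqVars Q ∧ σ v = σ w ∧ σ' v ≠ σ' w) →
      ¬ backApp τ Y Q σ' f)
    {a₀ a₁ : PAtom} {u₀ u₁ : ℕ} (ha₀ : a₀ ∈ Q) (hu₀ : u₀ ∈ a₀.2)
    (ha₀H : substP σ a₀ ≠ substP f τ.2) (ha₁ : a₁ ∈ Q) (hu₁ : u₁ ∈ a₁.2)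
    (hne : a₀ ≠ a₁ ∨ u₀ ≠ u₁) (hσ : σ u₀ = σ u₁) : 1 < occCount Q u₀ := by
  by_contra! hle
  have honce : ∀ a ∈ Q, u₀ ∈ a.2 → a = a₀ := fun a ha hua =>
    by_contra fun h => (one_lt_occCount_of_mem_of_mem ha ha₀ h hua hu₀).not_ge hle
  obtain rfl | hu := eq_or_ne u₀ u₁
  · exact hne.resolve_right (not_not.2 rfl) (honce a₁ ha₁ hu₁).symm
  have huY : u₀ ∉ Y := fun hy => hu (hApp.2.1 u₁ u₀ hy (hσ.symm.trans (hApp.1 u₀ hy))).symm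
  obtain ⟨σ', hfiner, hsep, hApp'⟩ :=
    exists_finer_backApp hApp hY huY fun a ha hua => honce a ha hua ▸ ha₀H
  exact hmin σ' hfiner ⟨u₀, u₁, ⟨a₀, ha₀, hu₀⟩, ⟨a₁, ha₁, hu₁⟩, hσ, (hsep u₁ hu.symm).symm⟩ hApp'

end MinimalUnifier

section RewritingStep

variable {m : ℕ → Set ℕ} {R : Set ERule} {τ : ERule} {Y T : Set ℕ} {Q : List PAtom}
  {σ f g : ℕ → ℕ}

lemma apply_mem_cqVars_of_backApp (hApp : backApp τ Y Q σ f) {x : ℕ} (hx : x ∈ headVars τ) :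
    f x ∈ cqVars (Q.map (substP σ)) :=
  ⟨substP f τ.2, hApp.2.2.1, List.mem_map_of_mem hx⟩

lemma apply_mem_of_mem_joinOrMarkedVars (hApp : backApp τ Y Q σ f) (hTY : T ⊆ Y)
    (hQ : joinOrMarkedVars m Q ⊆ T) {u : ℕ} (hu : u ∈ joinOrMarkedVars m Q) : σ u ∈ T :=
  (hApp.1 u (hTY (hQ hu))).symm ▸ hQ hu

lemma apply_mem_of_markedInHead (hApp : backApp τ Y Q σ f) (hTY : T ⊆ Y)
    (hQ : joinOrMarkedVars m Q ⊆ T) {x : ℕ} (hx : markedInHead m τ x) : f x ∈ T := by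
  obtain ⟨j, hj, hjx⟩ := hx
  obtain ⟨a₁, ha₁, hH⟩ := List.mem_map.1 hApp.2.2.1
  have : (a₁.2.map σ)[j]? = some (f x) := by
    rw [show a₁.2.map σ = τ.2.2.map f from congrArg Prod.snd hH, List.getElem?_map, hjx]; rfl
  rw [List.getElem?_map, Option.map_eq_some_iff] at this
  obtain ⟨u, hu, hux⟩ := this
  have hpred : a₁.1 = τ.2.1 := (Prod.ext_iff.1 hH).1
  exact hux ▸ apply_mem_of_mem_joinOrMarkedVars hApp hTY hQ (.inr ⟨a₁, ha₁, j, hpred ▸ hj, hu⟩)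

lemma injOn_bodyVarList_of_backApp (hApp : backApp τ Y Q σ f)
    (hgf : ∀ v ∈ frontierVars τ, g v = f v)
    (hginj : ∀ v w, v ∈ bodyVarList τ → v ∉ headVars τ → w ∈ bodyVarList τ →
      w ∉ headVars τ → g v = g w → v = w)
    (hfresh : ∀ v, v ∈ bodyVarList τ → v ∉ headVars τ → g v ∉ cqVars (Q.map (substP σ))) :
    Set.InjOn g {v | v ∈ bodyVarList τ} := by
  intro v hv w hw hvw
  by_cases hvh : v ∈ headVars τ <;> by_cases hwh : w ∈ headVars τ
  · rw [hgf v ⟨hv, hvh⟩, hgf w ⟨hw, hwh⟩] at hvw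
    exact hApp.2.2.2.1 v w hvh hwh hvw
  · exact absurd (hvw ▸ hgf v ⟨hv, hvh⟩ ▸ apply_mem_cqVars_of_backApp hApp hvh) (hfresh w hw hwh)
  · exact absurd (hvw ▸ hgf w ⟨hw, hwh⟩ ▸ apply_mem_cqVars_of_backApp hApp hwh) (hfresh v hv hvh)
  · exact hginj v w hv hvh hw hwh hvw

lemma mem_of_one_lt_occCount_rewrite (hApp : backApp τ Y Q σ f) (hY : Y.Finite)
    (hmin : ∀ σ' : ℕ → ℕ, (∀ v w, σ' v = σ' w → σ v = σ w) →
      (∃ v w, v ∈ cqVars Q ∧ w ∈ cqVars Q ∧ σ v = σ w ∧ σ' v ≠ σ' w) →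
      ¬ backApp τ Y Q σ' f)
    (hTY : T ⊆ Y) (hQ : joinOrMarkedVars m Q ⊆ T) (hgT : ∀ x ∈ joinOrMarkedVars m τ.1, g x ∈ T)
    (hgf : ∀ v ∈ frontierVars τ, g v = f v) (hginj : Set.InjOn g {v | v ∈ bodyVarList τ})
    (hfresh : ∀ v, v ∈ bodyVarList τ → v ∉ headVars τ → g v ∉ cqVars (Q.map (substP σ)))
    {v : ℕ} (hv : 1 < occCount ((Q.map (substP σ)).filter (fun a => decide (a ≠ substP f τ.2)) ++
      τ.1.map (substP g)) v) : v ∈ T := by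
  rw [occCount_append, List.filter_map, occCount_map_substP, occCount_map_substP] at hv
  set F := (Q.filter ((fun a => decide (a ≠ substP f τ.2)) ∘ substP σ)).flatMap Prod.snd
  have hF : ∀ u ∈ F, ∃ a ∈ Q, u ∈ a.2 ∧ substP σ a ≠ substP f τ.2 := fun u hu => by
    obtain ⟨a, ha, hua⟩ := List.mem_flatMap.1 hu
    obtain ⟨haQ, haH⟩ := List.mem_filter.1 ha
    exact ⟨a, haQ, hua, by simpa using haH⟩
  have hσT : ∀ u ∈ joinOrMarkedVars m Q, σ u ∈ T := fun _ =>
    apply_mem_of_mem_joinOrMarkedVars hApp hTY hQ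
  by_cases hvB : v ∈ (τ.1.flatMap Prod.snd).map g
  · obtain ⟨x, hx, rfl⟩ := List.mem_map.1 hvB
    rw [← bodyVarList_eq_flatMap] at hx hv
    rw [List.count_map_eq_count fun u hu hux => hginj hu hx hux, bodyVarList_eq_flatMap] at hv
    by_cases hxj : 1 < occCount τ.1 x
    · exact hgT x (.inl hxj)
    obtain ⟨u₀, hu₀, hσu₀⟩ := List.mem_map.1 (List.count_pos_iff.1
      (by unfold occCount at hxj; omega : 0 < (F.map σ).count (g x)))
    obtain ⟨a₀, ha₀, hu₀a₀, ha₀H⟩ := hF u₀ hu₀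
    have hxH : x ∈ headVars τ := by_contra fun hxH => hfresh x hx hxH
      (hσu₀ ▸ ⟨substP σ a₀, List.mem_map_of_mem ha₀, List.mem_map_of_mem hu₀a₀⟩)
    obtain ⟨a₁, ha₁, hH⟩ := List.mem_map.1 hApp.2.2.1
    obtain ⟨u₁, hu₁, hσu₁⟩ := List.mem_map.1 (show f x ∈ (substP σ a₁).2 from
      hH ▸ List.mem_map_of_mem hxH)
    have := one_lt_occCount_of_minimal hApp hY hmin ha₀ hu₀a₀ ha₀H ha₁ hu₁
      (.inl fun e => ha₀H (e ▸ hH)) (hσu₀.trans ((hgf x ⟨hx, hxH⟩).trans hσu₁.symm))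
    exact hσu₀ ▸ hσT u₀ (.inl this)
  · have h2 : 2 ≤ (F.map σ).count v := by rw [List.count_eq_zero.2 hvB] at hv; omega
    rcases List.exists_of_two_le_count_map h2 with
      ⟨u, hu, rfl, hu2⟩ | ⟨u₀, hu₀, u₁, hu₁, hne, rfl, hσ⟩
    · exact hσT u (.inl (hu2.trans ((List.filter_sublist.flatMap _).count_le u)))
    · obtain ⟨a₀, ha₀, hu₀a₀, ha₀H⟩ := hF u₀ hu₀
      obtain ⟨a₁, ha₁, hu₁a₁, -⟩ := hF u₁ hu₁
      exact hσT u₀ (.inl (one_lt_occCount_of_minimal hApp hY hmin ha₀ hu₀a₀ ha₀H ha₁ hu₁a₁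
        (.inr hne) hσ.symm))

lemma joinOrMarkedVars_subset_of_backStep (hm : stickyMarking m R) (hY : Y.Finite)
    (hTY : T ⊆ Y) {Q' : List PAtom} (hstep : backStep R Y Q Q')
    (hQ : joinOrMarkedVars m Q ⊆ T) : joinOrMarkedVars m Q' ⊆ T := by
  obtain ⟨τ, hτ, σ, f, g, hApp, hmin, hgf, hginj, hfresh, rfl⟩ := hstep
  have hσT : ∀ u ∈ joinOrMarkedVars m Q, σ u ∈ T := fun _ =>
    apply_mem_of_mem_joinOrMarkedVars hApp hTY hQ
  have hgT : ∀ x ∈ joinOrMarkedVars m τ.1, g x ∈ T := fun x hx => by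
    obtain ⟨hxF, hxH⟩ := mem_frontierVars_of_mem_joinOrMarkedVars hm hτ hx
    exact hgf x hxF ▸ apply_mem_of_markedInHead hApp hTY hQ hxH
  rintro v (hjoin | ⟨a, ha, i, hi, hv⟩)
  · exact mem_of_one_lt_occCount_rewrite hApp hY hmin hTY hQ hgT hgf
      (injOn_bodyVarList_of_backApp hApp hgf hginj fun v hv hvH => (hfresh v hv hvH).1)
      (fun v hv hvH => (hfresh v hv hvH).1) hjoin
  · rcases List.mem_append.1 ha with ha | ha
    · obtain ⟨a₀, ha₀, rfl⟩ := List.mem_map.1 (List.mem_filter.1 ha).1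
      obtain ⟨u, hu, rfl⟩ := Option.map_eq_some_iff.1 ((List.getElem?_map ..).symm.trans hv)
      exact hσT u (.inr ⟨a₀, ha₀, i, hi, hu⟩)
    · obtain ⟨b, hb, rfl⟩ := List.mem_map.1 ha
      obtain ⟨x, hx, rfl⟩ := Option.map_eq_some_iff.1 ((List.getElem?_map ..).symm.trans hv)
      exact hgT x (.inr ⟨b, hb, i, hi, hx⟩)

end RewritingStep

lemma joinOrMarkedVars_subset_of_reflTransGen {m : ℕ → Set ℕ} {R : Set ERule} {Y T : Set ℕ}
    {Q Q' : List PAtom} (hm : stickyMarking m R) (hY : Y.Finite) (hTY : T ⊆ Y)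
    (hQQ' : Relation.ReflTransGen (backStep R Y) Q Q') (hQ : joinOrMarkedVars m Q ⊆ T) :
    joinOrMarkedVars m Q' ⊆ T := by
  induction hQQ' with
  | refl => exact hQ
  | tail _ hstep ih => exact joinOrMarkedVars_subset_of_backStep hm hY hTY hstep ih

/-- For every sticky ruleset `R`, the ruleset `rew(R)`
(obtained by backward-rewriting the rule bodies) is sticky. -/
theorem rewriting_preserves_sticky (R : Ruleset) (h : isSticky R) :
    isStickySet (rewSet (rsSet R)) := by
  obtain ⟨m, hm⟩ := h
  refine ⟨m, stickyMarking_iff.2 ?_⟩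
  rintro _ (hρ | ⟨ρ, hρ, q, hq, rfl⟩)
  · exact stickyMarking_iff.1 hm _ hρ
  have hbody : joinOrMarkedVars m ρ.1 ⊆ frontierVars ρ ∩ {v | markedInHead m ρ v} :=
    fun _ => mem_frontierVars_of_mem_joinOrMarkedVars hm hρ
  exact (joinOrMarkedVars_subset_of_reflTransGen hm (frontierVars_finite ρ)
    Set.inter_subset_left hq hbody).trans Set.inter_subset_right
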